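/- arXiv:2505.04549 — 4 statements merged into one kernel-verified Lean document; each statement's English description precedes it below -/
import Mathlib

section
/- Let A = (Q, E, s, F) be a Wheeler GNFA, let ≤ be a Wheeler order on A, and let α ∈ Σ*. Then G_⊣(α) is ≤-convex: for all u, v, z ∈ Q with u < v < z, if u ∈ G_⊣(α) and z ∈ G_⊣(α), then v ∈ G_⊣(α). -/
/-- Strict co-lexicographic order: `α ≺ β` iff `α.reverse` is lexicographically
smaller than `β.reverse`. The empty string is the minimum. -/
def ColexLt {σ : Type*} [LinearOrder σ] (α β : List σ) : Prop :=
  List.Lex (· < ·) α.reverse β.reverse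

/-- Non-strict co-lexicographic order `α ≼ β`. -/
def ColexLe {σ : Type*} [LinearOrder σ] (α β : List σ) : Prop :=
  ColexLt α β ∨ α = β

/-- `α` is a strict suffix of `β`. -/
def IsStrictSuffix {σ : Type*} (α β : List σ) : Prop :=
  α <:+ β ∧ α ≠ β

/-- `p(α, k)`: the prefix of `α` of length `k`. -/
def pref {σ : Type*} (α : List σ) (k : ℕ) : List σ := α.take k

/-- `s(α, k)`: the suffix of `α` of length `k`. -/
def suff {σ : Type*} (α : List σ) (k : ℕ) : List σ := α.drop (α.length - k)

/-- The 1-based rank of a state in a finite linear order: `rankQ u = i` means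
`u = Q[i]` in the enumeration `Q[1] < Q[2] < ⋯ < Q[|Q|]`. -/
noncomputable def rankQ {Q : Type*} [Fintype Q] [LinearOrder Q] (u : Q) : ℕ :=
  {v : Q | v ≤ u}.ncard

/-- `Q[i, j] = {Q[i], …, Q[j]}` (empty if `i > j`). -/
def Qiv (Q : Type*) [Fintype Q] [LinearOrder Q] (i j : ℕ) : Set Q :=
  {u | i ≤ rankQ u ∧ rankQ u ≤ j}

/-- A generalized nondeterministic finite automaton: a finite set of
string-labeled edges `E ⊆ Q × Q × Σ*`, an initial state `s`, final states `F`. -/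
structure GNFA (σ Q : Type*) where
  E : Finset (Q × Q × List σ)
  s : Q
  F : Finset Q

namespace GNFA

variable {σ Q : Type*}

/-- `I A u β` means `β ∈ I_u`: `β` is obtained by concatenating the edge labels
along some path from `s` to `u` (in particular `ε ∈ I_s`). -/
inductive I (A : GNFA σ Q) : Q → List σ → Prop
  | base : I A A.s []
  | step {u v : Q} {α ρ : List σ} : I A u α → (u, v, ρ) ∈ A.E → I A v (α ++ ρ)

/-- Reachability along edges. -/
def Reach (A : GNFA σ Q) : Q → Q → Prop :=
  Relation.ReflTransGen (fun x y => ∃ ρ, (x, y, ρ) ∈ A.E)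

/-- Every state is reachable from the initial state and is co-reachable
(final or allows reaching a final state). -/
def Standard (A : GNFA σ Q) : Prop :=
  (∀ u, A.Reach A.s u) ∧ ∀ u, ∃ f ∈ A.F, A.Reach u f

/-- An ε-walk from `u` to `v`: a (possibly empty) sequence of ε-labeled edges. -/
def EpsWalk (A : GNFA σ Q) : Q → Q → Prop :=
  Relation.ReflTransGen (fun x y => (x, y, ([] : List σ)) ∈ A.E)

/-- An `r`-GNFA: all edge labels have length at most `r`. -/
def Bounded (A : GNFA σ Q) (r : ℕ) : Prop := ∀ e ∈ A.E, e.2.2.length ≤ r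

/-- A GNFA without ε-transitions: every edge label is nonempty. -/
def NoEps (A : GNFA σ Q) : Prop := ∀ e ∈ A.E, e.2.2 ≠ []

/-- `λ(u)`: the set of strings labeling some edge entering `u`. -/
def lab (A : GNFA σ Q) (u : Q) : Set (List σ) := {ρ | ∃ u', (u', u, ρ) ∈ A.E}

/-- `G_⊣(α)`: states `u` such that some `β ∈ I_u` has `α` as a suffix. -/
def Gsuf (A : GNFA σ Q) (α : List σ) : Set Q := {u | ∃ β, I A u β ∧ α <:+ β}

/-- `G*(α)`: states reached by an edge whose label has `α` as a suffix. -/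
def Gstar (A : GNFA σ Q) (α : List σ) : Set Q := {u | ∃ ρ ∈ A.lab u, α <:+ ρ}

section Colex
variable [LinearOrder σ]

/-- The preorder `u ≼_A v`. -/
def Preceq (A : GNFA σ Q) (u v : Q) : Prop :=
  ∀ α β, I A u α → I A v β →
    ¬((I A u α ∧ I A v α) ∧ (I A u β ∧ I A v β)) → ColexLt α β

/-- `G^≺(α)`: states `u` such that every `β ∈ I_u` satisfies `β ≺ α`. -/
def Gprec (A : GNFA σ Q) (α : List σ) : Set Q := {u | ∀ β, I A u β → ColexLt β α}

/-- `G^≺_⊣(α) = G^≺(α) ∪ G_⊣(α)`. -/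
def GprecSuf (A : GNFA σ Q) (α : List σ) : Set Q := A.Gprec α ∪ A.Gsuf α

/-- The linear order on `Q` is a Wheeler order on `A` (Axioms 1–4). -/
def IsWheeler [LinearOrder Q] (A : GNFA σ Q) : Prop :=
  (∀ u v : Q, u ≤ v → A.Preceq u v) ∧
  (∀ u : Q, A.s ≤ u) ∧
  (∀ u' u v' v : Q, ∀ ρ ρ' : List σ, (u', u, ρ) ∈ A.E → (v', v, ρ') ∈ A.E →
      u < v → ¬IsStrictSuffix ρ' ρ → ColexLe ρ ρ') ∧
  (∀ u' u v' v : Q, ∀ ρ : List σ, (u', u, ρ) ∈ A.E → (v', v, ρ) ∈ A.E →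
      u < v → u' ≤ v')

end Colex

section Indexed
variable [Fintype Q] [LinearOrder Q]

/-- `out(Q[1, m], ρ)`: number of edges labeled `ρ` leaving states in `Q[1, m]`. -/
noncomputable def outC (A : GNFA σ Q) (m : ℕ) (ρ : List σ) : ℕ :=
  {e : Q × Q × List σ | e ∈ A.E ∧ rankQ e.1 ≤ m ∧ e.2.2 = ρ}.ncard

/-- `in(Q[1, m], ρ)`: number of edges labeled `ρ` entering states in `Q[1, m]`. -/
noncomputable def inC (A : GNFA σ Q) (m : ℕ) (ρ : List σ) : ℕ :=
  {e : Q × Q × List σ | e ∈ A.E ∧ rankQ e.2.1 ≤ m ∧ e.2.2 = ρ}.ncard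

/-- `A_max[i]`: the largest `j` such that there is an ε-walk from `Q[j]` to `Q[i]`. -/
noncomputable def Amax (A : GNFA σ Q) (i : ℕ) : ℕ :=
  sSup {j | ∃ u v : Q, rankQ u = i ∧ rankQ v = j ∧ A.EpsWalk v u}

/-- `A_min[i]`: the smallest `j` such that there is an ε-walk from `Q[j]` to `Q[i]`. -/
noncomputable def Amin (A : GNFA σ Q) (i : ℕ) : ℕ :=
  sInf {j | ∃ u v : Q, rankQ u = i ∧ rankQ v = j ∧ A.EpsWalk v u}

variable [LinearOrder σ]

/-- `f_k = out(Q[1, |G^≺(p(α, |α|−k))|], s(α, k))`. -/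
noncomputable def fk (A : GNFA σ Q) (α : List σ) (k : ℕ) : ℕ :=
  A.outC ((A.Gprec (pref α (α.length - k))).ncard) (suff α k)

/-- `g_k = out(Q[1, |G^≺_⊣(p(α, |α|−k))|], s(α, k))`. -/
noncomputable def gk (A : GNFA σ Q) (α : List σ) (k : ℕ) : ℕ :=
  A.outC ((A.GprecSuf (pref α (α.length - k))).ncard) (suff α k)

/-- The property defining `j*` in Lemmas 2 and 4 (largest `j` satisfying it):
(i) `in(Q[1, j], s(α, k)) ≤ f_k` for every `0 < k < min{r+1, |α|}`; and
(ii) `ρ ≺ α` for every `ρ ∈ Σ^k ∩ λ(Q[h])`, every `1 ≤ h ≤ j`, every `0 < k < r+1`. -/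
def Jcond (A : GNFA σ Q) (r : ℕ) (α : List σ) (j : ℕ) : Prop :=
  (∀ k, 0 < k → k < min (r + 1) α.length → A.inC j (suff α k) ≤ A.fk α k) ∧
  (∀ k, 0 < k → k < r + 1 → ∀ h, 1 ≤ h → h ≤ j → ∀ u : Q, rankQ u = h →
      ∀ ρ : List σ, ρ.length = k → ρ ∈ A.lab u → ColexLt ρ α)

/-- The property defining `i*` (largest `i ≤ |Q|` satisfying it):
if `i ≥ 1` then `Q[i] ∈ G*(α)`. -/
def Icond (A : GNFA σ Q) (α : List σ) (i : ℕ) : Prop :=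
  1 ≤ i → ∃ u : Q, rankQ u = i ∧ u ∈ A.Gstar α

/-- The property defining `j°` (smallest `j ≤ |Q|` satisfying it):
`in(Q[1, j], s(α, k)) ≥ g_k` for every `0 < k < min{r+1, |α|}` with `g_k > f_k`. -/
def Jcond2 (A : GNFA σ Q) (r : ℕ) (α : List σ) (j : ℕ) : Prop :=
  ∀ k, 0 < k → k < min (r + 1) α.length → A.fk α k < A.gk α k →
    A.gk α k ≤ A.inC j (suff α k)

end Indexed

end GNFA

/-!
Every state `v` has some access string `β`. If `β` is shared with `u` or `z` we are done;
otherwise Axiom 1 puts `β` strictly between an access string of `u` and one of `z` in the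
co-lexicographic order, and a string lying co-lexicographically between two strings that end
in `α` must itself end in `α`.
-/

namespace List

theorem Lex.prefix_of_lex_of_lex {σ : Type*} {r : σ → σ → Prop} [IsStrictOrder σ r] :
    ∀ {p x y z : List σ}, p <+: x → p <+: z → Lex r x y → Lex r y z → p <+: y
  | [], _, _, _, _, _, _, _ => nil_prefix
  | c :: p, _, y, _, ⟨t, rfl⟩, ⟨t', rfl⟩, hxy, hyz => by
    cases hxy with
    | rel hcb =>
      cases hyz with
      | rel hbc => exact absurd (_root_.trans hcb hbc) (irrefl c)
      | cons => exact absurd hcb (irrefl c)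
    | cons hxy =>
      cases hyz with
      | rel hcc => exact absurd hcc (irrefl c)
      | cons hyz =>
        exact cons_prefix_cons.mpr
          ⟨rfl, prefix_of_lex_of_lex (prefix_append _ _) (prefix_append _ _) hxy hyz⟩

end List

theorem suffix_of_colexLt_of_colexLt {σ : Type*} [LinearOrder σ] {a x y z : List σ}
    (hx : a <:+ x) (hz : a <:+ z) (hxy : ColexLt x y) (hyz : ColexLt y z) : a <:+ y :=
  List.reverse_prefix.mp <|
    List.Lex.prefix_of_lex_of_lex (List.reverse_prefix.mpr hx) (List.reverse_prefix.mpr hz) hxy hyz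

namespace GNFA

variable {σ Q : Type*}

theorem exists_I_of_reach (A : GNFA σ Q) {v : Q} (h : A.Reach A.s v) : ∃ β, A.I v β := by
  induction h with
  | refl => exact ⟨[], I.base⟩
  | tail _ hstep ih =>
    obtain ⟨β, hβ⟩ := ih
    obtain ⟨ρ, hρ⟩ := hstep
    exact ⟨β ++ ρ, hβ.step hρ⟩

theorem Preceq.colexLt_or [LinearOrder σ] {A : GNFA σ Q} {u v : Q} (h : A.Preceq u v)
    {α β : List σ} (hα : A.I u α) (hβ : A.I v β) : ColexLt α β ∨ A.I v α ∧ A.I u β := by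
  by_cases hshared : A.I v α ∧ A.I u β
  · exact Or.inr hshared
  · exact Or.inl (h α β hα hβ fun h' => hshared ⟨h'.1.2, h'.2.1⟩)

end GNFA

theorem gsuf_convex_general {σ Q : Type*} [LinearOrder σ]
    [LinearOrder Q] (A : GNFA σ Q)
    (hA : A.Standard) (hW : A.IsWheeler) (α : List σ)
    (u v z : Q) (huv : u < v) (hvz : v < z)
    (hu : u ∈ A.Gsuf α) (hz : z ∈ A.Gsuf α) :
    v ∈ A.Gsuf α := by
  obtain ⟨βu, hIu, hαu⟩ := hu
  obtain ⟨βz, hIz, hαz⟩ := hz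
  obtain ⟨β, hIv⟩ := A.exists_I_of_reach (hA.1 v)
  rcases (hW.1 u v huv.le).colexLt_or hIu hIv with hlt₁ | ⟨hIvu, -⟩
  · rcases (hW.1 v z hvz.le).colexLt_or hIv hIz with hlt₂ | ⟨-, hIvz⟩
    · exact ⟨β, hIv, suffix_of_colexLt_of_colexLt hαu hαz hlt₁ hlt₂⟩
    · exact ⟨βz, hIvz, hαz⟩
  · exact ⟨βu, hIvu, hαu⟩

/-- Let `A` be a Wheeler GNFA with Wheeler order `≤` and
`α ∈ Σ*`. Then `G_⊣(α)` is `≤`-convex. -/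
theorem gsuf_convex {σ Q : Type*} [Fintype σ] [LinearOrder σ]
    [Fintype Q] [LinearOrder Q] (A : GNFA σ Q)
    (hA : A.Standard) (hW : A.IsWheeler) (α : List σ)
    (u v z : Q) (huv : u < v) (hvz : v < z)
    (hu : u ∈ A.Gsuf α) (hz : z ∈ A.Gsuf α) :
    v ∈ A.Gsuf α :=
  gsuf_convex_general A hA hW α u v z huv hvz hu hz
end

section
/- Let A = (Q, E, s, F) be a Wheeler GNFA, let ≤ be a Wheeler order on A, and let α ∈ Σ*. If u, v ∈ Q are such that u < v and v ∈ G^≺(α), then u ∈ G^≺(α). In other words, G^≺(α) = Q[1, |G^≺(α)|]. -/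
/-
A state `u` below `v` in a Wheeler order satisfies `u ≼_A v` (Axiom 1). Every string `β ∈ I_u`
is therefore either also in `I_v`, hence `≺ α` when `v ∈ G^≺(α)`, or it is not, and then it is
`≺`-below any `γ ∈ I_v`, which exists because `v` is reachable. So `G^≺(α)` is a lower set of
the finite linear order `Q`, i.e. an initial segment `Q[1, m]`, and necessarily `m = |G^≺(α)|`.
-/

theorem ColexLt.trans {σ : Type*} [LinearOrder σ] {α β γ : List σ}
    (h₁ : ColexLt α β) (h₂ : ColexLt β γ) : ColexLt α γ :=
  List.lt_trans (α := σ) h₁ h₂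

section Rank

variable {Q : Type*} [Fintype Q] [LinearOrder Q]

theorem one_le_rankQ (u : Q) : 1 ≤ rankQ u :=
  (Set.ncard_singleton u).symm.le.trans
    (Set.ncard_le_ncard (Set.singleton_subset_iff.2 (Set.self_mem_Iic (a := u))))

theorem IsLowerSet.rankQ_le_ncard {S : Set Q} (hS : IsLowerSet S) {u : Q} (hu : u ∈ S) :
    rankQ u ≤ S.ncard :=
  Set.ncard_le_ncard fun _ hv => hS hv hu

theorem IsLowerSet.ncard_lt_rankQ {S : Set Q} (hS : IsLowerSet S) {u : Q} (hu : u ∉ S) :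
    S.ncard < rankQ u := by
  have hS_sub : S ⊆ Set.Iio u := fun v hv => lt_of_not_ge fun huv => hu (hS huv hv)
  calc S.ncard ≤ (Set.Iio u).ncard := Set.ncard_le_ncard hS_sub
    _ < (Set.Iic u).ncard := Set.ncard_lt_ncard Set.Iio_ssubset_Iic_self

theorem IsLowerSet.eq_Qiv_ncard {S : Set Q} (hS : IsLowerSet S) : S = Qiv Q 1 S.ncard := by
  ext u
  refine ⟨fun hu => ⟨one_le_rankQ u, hS.rankQ_le_ncard hu⟩, fun ⟨_, hle⟩ => ?_⟩
  by_contra hu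
  exact absurd hle (hS.ncard_lt_rankQ hu).not_ge

end Rank

namespace GNFA

variable {σ Q : Type*}

variable [LinearOrder σ]

theorem Preceq.mem_gprec {A : GNFA σ Q} {u v : Q} (huv : A.Preceq u v) (hv_I : ∃ γ, A.I v γ)
    {α : List σ} (hv : v ∈ A.Gprec α) : u ∈ A.Gprec α := by
  intro β hβ
  by_cases hvβ : A.I v β
  · exact hv β hvβ
  · obtain ⟨γ, hγ⟩ := hv_I
    have hβγ : ColexLt β γ := huv β γ hβ hγ fun h => hvβ h.1.2
    exact hβγ.trans (hv γ hγ)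

theorem isLowerSet_gprec [LinearOrder Q] {A : GNFA σ Q} (hA : A.Standard) (hW : A.IsWheeler)
    (α : List σ) : IsLowerSet (A.Gprec α) :=
  fun v u huv hv => (hW.1 u v huv).mem_gprec (A.exists_I_of_reach (hA.1 v)) hv

end GNFA

theorem gprec_downward_closed_general {σ Q : Type*} [LinearOrder σ]
    [Fintype Q] [LinearOrder Q] (A : GNFA σ Q)
    (hA : A.Standard) (hW : A.IsWheeler) (α : List σ) :
    (∀ u v : Q, u < v → v ∈ A.Gprec α → u ∈ A.Gprec α) ∧
    A.Gprec α = Qiv Q 1 (A.Gprec α).ncard := by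
  have hlower := GNFA.isLowerSet_gprec hA hW α
  exact ⟨fun _ _ huv hv => hlower huv.le hv, hlower.eq_Qiv_ncard⟩

/-- Let `A` be a Wheeler GNFA with Wheeler order `≤` and
`α ∈ Σ*`. If `u < v` and `v ∈ G^≺(α)`, then `u ∈ G^≺(α)`; in other words,
`G^≺(α) = Q[1, |G^≺(α)|]`. -/
theorem gprec_downward_closed {σ Q : Type*} [Fintype σ] [LinearOrder σ]
    [Fintype Q] [LinearOrder Q] (A : GNFA σ Q)
    (hA : A.Standard) (hW : A.IsWheeler) (α : List σ) :
    (∀ u v : Q, u < v → v ∈ A.Gprec α → u ∈ A.Gprec α) ∧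
    A.Gprec α = Qiv Q 1 (A.Gprec α).ncard :=
  gprec_downward_closed_general A hA hW α
end

section
/- Let A = (Q, E, s, F) be a Wheeler r-GNFA, let ≤ be a Wheeler order on A, and let α ∈ Σ* with α ≠ ε. Let i* be the largest integer 0 ≤ i ≤ |Q| such that, if i ≥ 1, then Q[i] ∈ G*(α). If i* ≥ 1, then Q[i*] ∈ G_⊣(α). -/
theorem rankQ_strictMono {Q : Type*} [Fintype Q] [LinearOrder Q] :
    StrictMono (rankQ (Q := Q)) := fun _ _ huv =>
  Set.ncard_lt_ncard (Set.Iic_ssubset_Iic.mpr huv) (Set.toFinite _)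

namespace GNFA

variable {σ Q : Type*} (A : GNFA σ Q)

theorem Reach.exists_I {u : Q} (h : A.Reach A.s u) : ∃ γ, A.I u γ := by
  induction h with
  | refl => exact ⟨[], I.base⟩
  | tail _ hstep ih =>
    obtain ⟨γ, hγ⟩ := ih
    obtain ⟨ρ, hρ⟩ := hstep
    exact ⟨γ ++ ρ, hγ.step hρ⟩

theorem Gstar_subset_Gsuf (hreach : ∀ u, A.Reach A.s u) (α : List σ) :
    A.Gstar α ⊆ A.Gsuf α := by
  rintro u ⟨ρ, ⟨u', hedge⟩, hsuf⟩
  obtain ⟨γ, hγ⟩ := (hreach u').exists_I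
  exact ⟨γ ++ ρ, hγ.step hedge, hsuf.trans (List.suffix_append γ ρ)⟩

end GNFA

theorem istar_mem_gsuf_general {σ Q : Type*}
    [Fintype Q] [LinearOrder Q] (A : GNFA σ Q)
    (hA : A.Standard)
    (α : List σ)
    (istar : ℕ) (hi : A.Icond α istar)
    (h1 : 1 ≤ istar) :
    ∀ u : Q, rankQ u = istar → u ∈ A.Gsuf α := by
  intro u hu
  obtain ⟨v, hv, hvα⟩ := hi h1
  obtain rfl : u = v := rankQ_strictMono.injective (hu.trans hv.symm)
  exact A.Gstar_subset_Gsuf hA.1 α hvα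

/-- Let `A` be a Wheeler `r`-GNFA with Wheeler order `≤` and
`α ≠ ε`. Let `i*` be the largest `0 ≤ i ≤ |Q|` such that, if `i ≥ 1`, then
`Q[i] ∈ G*(α)`. If `i* ≥ 1`, then `Q[i*] ∈ G_⊣(α)`. -/
theorem istar_mem_gsuf {σ Q : Type*} [Fintype σ] [LinearOrder σ]
    [Fintype Q] [LinearOrder Q] (A : GNFA σ Q)
    (hA : A.Standard) (hW : A.IsWheeler) (r : ℕ) (hr : A.Bounded r)
    (α : List σ) (hα : α ≠ [])
    (istar : ℕ) (hi_le : istar ≤ Fintype.card Q) (hi : A.Icond α istar)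
    (hi_max : ∀ i ≤ Fintype.card Q, A.Icond α i → i ≤ istar)
    (h1 : 1 ≤ istar) :
    ∀ u : Q, rankQ u = istar → u ∈ A.Gsuf α :=
  istar_mem_gsuf_general A hA α istar hi h1
end

section
/- Let A = (Q, E, s, F) be a Wheeler GNFA with Wheeler order ≤. Then A has no ε-labeled cycle through two or more distinct states: for every t ≥ 2, there exist no pairwise distinct states u_1, u_2, ..., u_t ∈ Q such that (u_i, u_{i+1}, ε) ∈ E for every 1 ≤ i ≤ t−1 and (u_t, u_1, ε) ∈ E. -/
/-!
Axiom 4 with `ρ = ε` says that along ε-edges the order of the sources follows the order of the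
targets. On an ε-cycle, let `v` be the largest state, `p` its predecessor and `w` its successor.
Since `w < v`, the edges `v → w` and `p → v` give `v ≤ p`, so `p = v`, contradicting distinctness.
-/

theorem isEmpty_of_rel_derangement {ι α : Type*} [Finite ι] [LinearOrder α] {R : α → α → Prop}
    (hR : ∀ ⦃a' a b' b⦄, R a' a → R b' b → a < b → a' ≤ b')
    (next : Equiv.Perm ι) (hnext : ∀ i, next i ≠ i) {f : ι → α} (hf : Function.Injective f)
    (hstep : ∀ i, R (f i) (f (next i))) : IsEmpty ι := by
  refine isEmpty_iff.mpr fun i => ?_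
  have : Nonempty ι := ⟨i⟩
  obtain ⟨m, hm⟩ := Finite.exists_max f
  set p := next.symm m
  have hsucc_lt : f (next m) < f m := (hm _).lt_of_ne (hf.ne (hnext m))
  have hm_le : f m ≤ f p :=
    hR (hstep m) (by simpa only [p, Equiv.apply_symm_apply] using hstep p) hsucc_lt
  have hpm : p = m := hf ((hm p).antisymm hm_le)
  exact hnext m (next.symm_apply_eq.mp hpm).symm

theorem no_eps_cycle_general {σ Q : Type*} [LinearOrder σ]
    [LinearOrder Q] (A : GNFA σ Q)
    (hW : A.IsWheeler) :
    ∀ t : ℕ, 2 ≤ t →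
      ¬∃ u : ℕ → Q,
        (∀ i j, i < t → j < t → i ≠ j → u i ≠ u j) ∧
        (∀ i, i < t - 1 → (u i, u (i + 1), ([] : List σ)) ∈ A.E) ∧
        (u (t - 1), u 0, ([] : List σ)) ∈ A.E := by
  rintro t ht ⟨u, hdist, hedge, hlast⟩
  obtain ⟨n, rfl⟩ : ∃ n, t = n + 2 := ⟨t - 2, by omega⟩
  have hstep (i : Fin (n + 2)) : (u i, u (finRotate (n + 2) i), ([] : List σ)) ∈ A.E := by
    by_cases hi : i = Fin.last (n + 1)
    · simpa [hi] using hlast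
    · rw [coe_finRotate_of_ne_last hi]
      exact hedge i (by simpa using Fin.val_lt_last hi)
  have hnext (i : Fin (n + 2)) : finRotate (n + 2) i ≠ i :=
    Equiv.Perm.mem_support.mp (by simp [support_finRotate])
  have hinj : Function.Injective fun i : Fin (n + 2) => u i := fun i j hij =>
    Fin.ext (by_contra fun hne => hdist i j i.2 j.2 hne hij)
  exact (isEmpty_of_rel_derangement (fun _ _ _ _ => hW.2.2.2 _ _ _ _ [])
    (finRotate (n + 2)) hnext hinj hstep).false 0

/-- **Property 1.** A Wheeler GNFA has no ε-labeled cycle through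
two or more distinct states: for every `t ≥ 2`, there exist no pairwise distinct
states `u_0, …, u_{t-1}` with `(u_i, u_{i+1}, ε) ∈ E` for `0 ≤ i ≤ t−2` and
`(u_{t-1}, u_0, ε) ∈ E`. -/
theorem no_eps_cycle {σ Q : Type*} [Fintype σ] [LinearOrder σ]
    [Fintype Q] [LinearOrder Q] (A : GNFA σ Q)
    (hA : A.Standard) (hW : A.IsWheeler) :
    ∀ t : ℕ, 2 ≤ t →
      ¬∃ u : ℕ → Q,
        (∀ i j, i < t → j < t → i ≠ j → u i ≠ u j) ∧
        (∀ i, i < t - 1 → (u i, u (i + 1), ([] : List σ)) ∈ A.E) ∧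
        (u (t - 1), u 0, ([] : List σ)) ∈ A.E :=
  no_eps_cycle_general A hW
end
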